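/- arXiv:1509.00566 — 2 statements merged into one kernel-verified Lean document; each statement's English description precedes it below -/
import Mathlib

section
/- Let V be a real vector space, and let a_h and b be symmetric bilinear forms on V. Let λ, λ_h be real numbers and u, u_h, v ∈ V such that: b(u,u) = 1 and a_h(u,u) = λ (the exact eigenpair, normalized, with the broken form a_h agreeing with the exact form on the exact eigenfunction); b(u_h,u_h) = 1, a_h(u_h,u_h) = λ_h, and a_h(u_h,v) = λ_h·b(u_h,v) (the discrete eigenpair tested against v). Then the identity λ − λ_h = a_h(u−u_h, u−u_h) − λ_h·b(u−u_h, u−u_h) − 2λ_h·b(u−v, u_h) + 2·a_h(u−v, u_h) holds. -/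
theorem LinearMap.apply_sub_sub_of_symm {R M : Type*} [CommRing R] [AddCommGroup M] [Module R M]
    (B : M →ₗ[R] M →ₗ[R] R) (hB : ∀ x y, B x y = B y x) (x y : M) :
    B (x - y) (x - y) = B x x - 2 * B x y + B y y := by
  simp only [map_sub, LinearMap.sub_apply, hB y x]
  ring

/-- Lemma 3.1 (abstract error identity for nonconforming eigenvalue approximation). -/
theorem morley_error_identity {V : Type*} [AddCommGroup V] [Module ℝ V]
    (a b : V →ₗ[ℝ] V →ₗ[ℝ] ℝ)
    (ha_symm : ∀ x y, a x y = a y x) (hb_symm : ∀ x y, b x y = b y x)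
    (lam lamh : ℝ) (u uh v : V)
    (hub : b u u = 1) (hua : a u u = lam)
    (huhb : b uh uh = 1) (huha : a uh uh = lamh)
    (heig : a uh v = lamh * b uh v) :
    lam - lamh =
      a (u - uh) (u - uh) - lamh * b (u - uh) (u - uh)
        - 2 * lamh * b (u - v) uh + 2 * a (u - v) uh := by
  have hea : a v uh = lamh * b v uh := by rw [ha_symm, hb_symm, heig]
  -- Once the squares are expanded, the cross terms in `u, uh` cancel and the ones in `v` cancel by `hea`.
  rw [a.apply_sub_sub_of_symm ha_symm, b.apply_sub_sub_of_symm hb_symm,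
    map_sub, map_sub, LinearMap.sub_apply, LinearMap.sub_apply, hea]
  linear_combination lamh * hub + lamh * huhb - hua - huha
end

section
/- Let n ≥ 1 and let u : ℝⁿ → ℝ be a smooth (C^∞) function with compact support. Then (∫_{ℝⁿ} (Δu(x))² dx)^{3/2} ≤ (∫_{ℝⁿ} u(x)² dx)^{1/2} · (∫_{ℝⁿ} ‖∇(Δu)(x)‖² dx); equivalently, ‖Δu‖_{L²}³ ≤ ‖u‖_{L²} · ‖∇(Δu)‖_{L²}². In particular, if ∫_{ℝⁿ} u² dx = 1 and λ := ∫_{ℝⁿ} (Δu)² dx, then ‖∇(Δu)‖_{L²} ≥ λ^{3/4}. -/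
open MeasureTheory

section Aux

variable {n : ℕ}

local notation "E" => EuclideanSpace ℝ (Fin n)

lemma smooth_pderiv {f : E → ℝ} (hf : ContDiff ℝ (⊤ : ℕ∞) f) (w : E) :
    ContDiff ℝ (⊤ : ℕ∞) (fun x => fderiv ℝ f x w) :=
  (hf.fderiv_right (by simp)).clm_apply contDiff_const

lemma supp_pderiv {f : E → ℝ} (hf : HasCompactSupport f) (w : E) :
    HasCompactSupport (fun x => fderiv ℝ f x w) :=
  (hf.fderiv ℝ).comp_left (g := fun L : E →L[ℝ] ℝ => L w) rfl

/-- Integration by parts. -/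
lemma ibp {f g : E → ℝ} (hf : ContDiff ℝ (⊤ : ℕ∞) f) (hf' : HasCompactSupport f)
    (hg : ContDiff ℝ (⊤ : ℕ∞) g) (hg' : HasCompactSupport g) (w : E) :
    ∫ x, (fderiv ℝ f x w) * g x = - ∫ x, f x * (fderiv ℝ g x w) := by
  obtain ⟨C, hC⟩ := hf.lipschitzWith_of_hasCompactSupport hf' (by simp)
  obtain ⟨D, hD⟩ := hg.lipschitzWith_of_hasCompactSupport hg' (by simp)
  have h := LipschitzWith.integral_lineDeriv_mul_eq (μ := volume) hC hD hg' w
  have h1 : ∀ x, lineDeriv ℝ f x w = fderiv ℝ f x w := fun x =>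
    ((hf.differentiable (by simp)) x).lineDeriv_eq_fderiv
  have h2 : ∀ x, lineDeriv ℝ g x (-w) = -fderiv ℝ g x w := fun x => by
    rw [((hg.differentiable (by simp)) x).lineDeriv_eq_fderiv, map_neg]
  simp only [h1, h2] at h
  rw [h, ← integral_neg]
  congr 1; ext x; ring

/-- Cauchy–Schwarz for integrals of continuous compactly supported functions. -/
lemma cs_integral {V : Type*} [NormedAddCommGroup V] {F G : E → V}
    (hF : Continuous F) (hF' : HasCompactSupport F)
    (hG : Continuous G) (hG' : HasCompactSupport G) :
    ∫ x, ‖F x‖ * ‖G x‖ ≤ Real.sqrt (∫ x, ‖F x‖ ^ 2) * Real.sqrt (∫ x, ‖G x‖ ^ 2) := by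
  have hpq : Real.HolderConjugate 2 2 := Real.holderConjugate_iff.mpr ⟨one_lt_two, by norm_num⟩
  have hFm : MemLp F (ENNReal.ofReal 2) (volume : Measure E) := by
    simpa using hF.memLp_of_hasCompactSupport (p := 2) hF'
  have hGm : MemLp G (ENNReal.ofReal 2) (volume : Measure E) := by
    simpa using hG.memLp_of_hasCompactSupport (p := 2) hG'
  have h := integral_mul_norm_le_Lp_mul_Lq (μ := volume) hpq hFm hGm
  have e1 : ∀ x : E, ‖F x‖ ^ (2 : ℝ) = ‖F x‖ ^ 2 := fun x => by
    rw [← Real.rpow_natCast (‖F x‖) 2]; norm_num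
  have e2 : ∀ x : E, ‖G x‖ ^ (2 : ℝ) = ‖G x‖ ^ 2 := fun x => by
    rw [← Real.rpow_natCast (‖G x‖) 2]; norm_num
  simp only [e1, e2] at h
  calc ∫ x, ‖F x‖ * ‖G x‖ ≤ (∫ x, ‖F x‖ ^ 2) ^ ((1:ℝ)/2) * (∫ x, ‖G x‖ ^ 2) ^ ((1:ℝ)/2) := h
    _ = Real.sqrt (∫ x, ‖F x‖ ^ 2) * Real.sqrt (∫ x, ‖G x‖ ^ 2) := by
        rw [Real.sqrt_eq_rpow, Real.sqrt_eq_rpow]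

lemma grad_inner_eq (f : E → ℝ) (x v : E) :
    (inner ℝ (gradient f x) v : ℝ) = fderiv ℝ f x v :=
  InnerProductSpace.toDual_symm_apply

lemma grad_apply (f : E → ℝ) (x : E) (i : Fin n) :
    gradient f x i = fderiv ℝ f x (EuclideanSpace.single i 1) := by
  rw [← grad_inner_eq f x (EuclideanSpace.single i 1), EuclideanSpace.inner_single_right]
  simp

lemma grad_inner_grad (f g : E → ℝ) (x : E) :
    (inner ℝ (gradient f x) (gradient g x) : ℝ)
      = ∑ i : Fin n, (fderiv ℝ f x (EuclideanSpace.single i 1))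
          * (fderiv ℝ g x (EuclideanSpace.single i 1)) := by
  rw [PiLp.inner_apply]
  simp [grad_apply, mul_comm]

lemma grad_norm_sq (f : E → ℝ) (x : E) :
    ‖gradient f x‖ ^ 2
      = ∑ i : Fin n, (fderiv ℝ f x (EuclideanSpace.single i 1)) ^ 2 := by
  rw [← real_inner_self_eq_norm_sq, grad_inner_grad]
  simp [sq]

lemma grad_cont {f : E → ℝ} (hf : ContDiff ℝ (⊤ : ℕ∞) f) : Continuous (gradient f) := by
  exact ((InnerProductSpace.toDual ℝ _).symm.continuous).comp (hf.continuous_fderiv (by simp))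

lemma grad_supp {f : E → ℝ} (hf : HasCompactSupport f) :
    HasCompactSupport (gradient f) :=
  (hf.fderiv ℝ).comp_left (map_zero _)

lemma hcs_sum {ι : Type*} (s : Finset ι) (h : ι → E → ℝ)
    (hh : ∀ i ∈ s, HasCompactSupport (h i)) :
    HasCompactSupport (fun x => ∑ i ∈ s, h i x) := by
  classical
  induction s using Finset.cons_induction with
  | empty => simp only [Finset.sum_empty]; exact HasCompactSupport.zero
  | cons a s ha ih =>
      simp only [Finset.sum_cons]
      exact (hh a (Finset.mem_cons_self a s)).add
        (ih fun i hi => hh i (Finset.mem_cons_of_mem hi))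

end Aux

/-- The Laplacian of `u : ℝⁿ → ℝ`, as the sum of the second partial derivatives
along the coordinate directions. -/
noncomputable def lap {n : ℕ} (u : EuclideanSpace ℝ (Fin n) → ℝ)
    (x : EuclideanSpace ℝ (Fin n)) : ℝ :=
  ∑ i : Fin n,
    fderiv ℝ (fun y => fderiv ℝ u y (EuclideanSpace.single i 1)) x (EuclideanSpace.single i 1)

/-- Combination of (3.21) and (3.22):
`(∫ (Δu)²)^{3/2} ≤ (∫ u²)^{1/2} · ∫ ‖∇(Δu)‖²`; in particular, if `∫ u² = 1` and
`λ = ∫ (Δu)²`, then `(∫ ‖∇(Δu)‖²)^{1/2} ≥ λ^{3/4}`. -/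
theorem lap_sq_integral_pow_le {n : ℕ} (hn : 1 ≤ n)
    (u : EuclideanSpace ℝ (Fin n) → ℝ)
    (hu : ContDiff ℝ (⊤ : ℕ∞) u) (hsupp : HasCompactSupport u) :
    ((∫ x, (lap u x) ^ 2) ^ ((3 : ℝ) / 2) ≤
      Real.sqrt (∫ x, (u x) ^ 2) * ∫ x, ‖gradient (lap u) x‖ ^ 2) ∧
    ((∫ x, (u x) ^ 2) = 1 →
      Real.sqrt (∫ x, ‖gradient (lap u) x‖ ^ 2) ≥
        (∫ x, (lap u x) ^ 2) ^ ((3 : ℝ) / 4)) := by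
  classical
  set e : Fin n → EuclideanSpace ℝ (Fin n) := fun i => EuclideanSpace.single i 1 with he
  -- first partial derivatives
  set d1 : Fin n → EuclideanSpace ℝ (Fin n) → ℝ := fun i x => fderiv ℝ u x (e i) with hd1
  have hd1s : ∀ i, ContDiff ℝ (⊤ : ℕ∞) (d1 i) := fun i => smooth_pderiv hu (e i)
  have hd1c : ∀ i, HasCompactSupport (d1 i) := fun i => supp_pderiv hsupp (e i)
  -- second partial derivatives
  set d2 : Fin n → EuclideanSpace ℝ (Fin n) → ℝ := fun i x => fderiv ℝ (d1 i) x (e i) with hd2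
  have hd2s : ∀ i, ContDiff ℝ (⊤ : ℕ∞) (d2 i) := fun i => smooth_pderiv (hd1s i) (e i)
  have hd2c : ∀ i, HasCompactSupport (d2 i) := fun i => supp_pderiv (hd1c i) (e i)
  have hlap : ∀ x, lap u x = ∑ i : Fin n, d2 i x := fun x => rfl
  have hLs : ContDiff ℝ (⊤ : ℕ∞) (lap u) := by
    have : ContDiff ℝ (⊤ : ℕ∞) (fun x => ∑ i : Fin n, d2 i x) :=
      ContDiff.sum fun i _ => hd2s i
    exact this
  have hLc : HasCompactSupport (lap u) := by
    have := hcs_sum Finset.univ d2 (fun i _ => hd2c i)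
    exact this
  -- partial derivatives of lap u
  set dL : Fin n → EuclideanSpace ℝ (Fin n) → ℝ := fun i x => fderiv ℝ (lap u) x (e i) with hdL
  have hdLs : ∀ i, ContDiff ℝ (⊤ : ℕ∞) (dL i) := fun i => smooth_pderiv hLs (e i)
  have hdLc : ∀ i, HasCompactSupport (dL i) := fun i => supp_pderiv hLc (e i)
  have intg : ∀ {f : EuclideanSpace ℝ (Fin n) → ℝ}, Continuous f → HasCompactSupport f →
      Integrable f (volume : Measure (EuclideanSpace ℝ (Fin n))) := fun hf hf' =>
    hf.integrable_of_hasCompactSupport hf'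
  -- abbreviations
  set a := ∫ x, (u x) ^ 2 with ha
  set b := ∫ x, (lap u x) ^ 2 with hb
  set c := ∫ x, ‖gradient (lap u) x‖ ^ 2 with hc
  set g := ∫ x, ‖gradient u x‖ ^ 2 with hgdef
  have ha0 : 0 ≤ a := integral_nonneg fun x => sq_nonneg _
  have hb0 : 0 ≤ b := integral_nonneg fun x => sq_nonneg _
  have hc0 : 0 ≤ c := integral_nonneg fun x => sq_nonneg _
  have hg0 : 0 ≤ g := integral_nonneg fun x => sq_nonneg _
  -- key identity 1 : b = - ∫ ⟪∇u, ∇(lap u)⟫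
  have key1 : b = - ∫ x, (inner ℝ (gradient u x) (gradient (lap u) x) : ℝ) := by
    have step1 : b = ∑ i : Fin n, ∫ x, d2 i x * lap u x := by
      rw [hb]
      have hpt : ∀ x, (lap u x) ^ 2 = ∑ i : Fin n, d2 i x * lap u x := by
        intro x; rw [sq, hlap, Finset.sum_mul]
      simp_rw [hpt]
      exact integral_finset_sum _ fun i _ =>
        intg ((hd2s i).continuous.mul hLs.continuous) ((hd2c i).mul_right)
    have step2 : ∀ i : Fin n, ∫ x, d2 i x * lap u x = - ∫ x, d1 i x * dL i x := by
      intro i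
      exact ibp (hd1s i) (hd1c i) hLs hLc (e i)
    have step3 : ∑ i : Fin n, ∫ x, d1 i x * dL i x
        = ∫ x, (inner ℝ (gradient u x) (gradient (lap u) x) : ℝ) := by
      rw [← integral_finset_sum _ (f := fun i x => d1 i x * dL i x) (fun i _ =>
        intg ((hd1s i).continuous.mul (hdLs i).continuous) ((hd1c i).mul_right))]
      apply integral_congr_ae
      filter_upwards with x
      rw [grad_inner_grad]
    rw [step1]
    simp_rw [step2]
    rw [Finset.sum_neg_distrib, step3]
  -- key identity 2 : g = - ∫ u * lap u
  have key2 : g = - ∫ x, u x * lap u x := by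
    have step1 : g = ∑ i : Fin n, ∫ x, d1 i x * d1 i x := by
      rw [hgdef]
      have hpt : ∀ x, ‖gradient u x‖ ^ 2 = ∑ i : Fin n, d1 i x * d1 i x := by
        intro x; rw [grad_norm_sq]
        exact Finset.sum_congr rfl fun i _ => _root_.sq (d1 i x)
      simp_rw [hpt]
      exact integral_finset_sum _ fun i _ =>
        intg ((hd1s i).continuous.mul (hd1s i).continuous) ((hd1c i).mul_right)
    have step2 : ∀ i : Fin n, ∫ x, d1 i x * d1 i x = - ∫ x, u x * d2 i x := by
      intro i
      exact ibp hu hsupp (hd1s i) (hd1c i) (e i)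
    have step3 : ∑ i : Fin n, ∫ x, u x * d2 i x = ∫ x, u x * lap u x := by
      rw [← integral_finset_sum _ (f := fun i x => u x * d2 i x) (fun i _ =>
        intg (hu.continuous.mul (hd2s i).continuous) ((hsupp).mul_right))]
      apply integral_congr_ae
      filter_upwards with x
      rw [hlap, Finset.mul_sum]
    rw [step1]
    simp_rw [step2]
    rw [Finset.sum_neg_distrib, step3]
  -- Cauchy–Schwarz bounds
  have hinncont : Continuous (fun x => (inner ℝ (gradient u x) (gradient (lap u) x) : ℝ)) :=
    (grad_cont hu).inner (grad_cont hLs)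
  have hinnsupp : HasCompactSupport
      (fun x => (inner ℝ (gradient u x) (gradient (lap u) x) : ℝ)) :=
    HasCompactSupport.comp₂_left (grad_supp hsupp) (grad_supp hLc) (inner_zero_left 0)
  have csb : b ≤ Real.sqrt g * Real.sqrt c := by
    rw [key1, ← integral_neg]
    calc ∫ x, -(inner ℝ (gradient u x) (gradient (lap u) x) : ℝ)
        ≤ ∫ x, ‖gradient u x‖ * ‖gradient (lap u) x‖ := by
          apply integral_mono
          · exact (intg hinncont hinnsupp).neg
          · exact intg ((grad_cont hu).norm.mul (grad_cont hLs).norm)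
              ((grad_supp hsupp).norm.mul_right)
          · intro x
            exact (neg_le_abs _).trans (abs_real_inner_le_norm _ _)
      _ ≤ Real.sqrt g * Real.sqrt c :=
          cs_integral (grad_cont hu) (grad_supp hsupp) (grad_cont hLs) (grad_supp hLc)
  have csg : g ≤ Real.sqrt a * Real.sqrt b := by
    rw [key2, ← integral_neg]
    calc ∫ x, -(u x * lap u x)
        ≤ ∫ x, ‖u x‖ * ‖lap u x‖ := by
          apply integral_mono
          · exact (intg (hu.continuous.mul hLs.continuous) hsupp.mul_right).neg
          · exact intg (hu.continuous.norm.mul hLs.continuous.norm) hsupp.norm.mul_right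
          · intro x
            dsimp only
            rw [Real.norm_eq_abs, Real.norm_eq_abs, ← abs_mul]
            exact neg_le_abs _
      _ ≤ Real.sqrt (∫ x, ‖u x‖ ^ 2) * Real.sqrt (∫ x, ‖lap u x‖ ^ 2) :=
          cs_integral hu.continuous hsupp hLs.continuous hLc
      _ = Real.sqrt a * Real.sqrt b := by
          simp_rw [Real.norm_eq_abs, sq_abs, ha, hb]
  -- algebra
  have hb2 : b ^ 2 ≤ g * c := by
    nlinarith [Real.sq_sqrt hg0, Real.sq_sqrt hc0, Real.sqrt_nonneg g, Real.sqrt_nonneg c]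
  have hg2 : g ^ 2 ≤ a * b := by
    nlinarith [Real.sq_sqrt ha0, Real.sq_sqrt hb0, Real.sqrt_nonneg a, Real.sqrt_nonneg b]
  have key : b ^ 3 ≤ a * c ^ 2 := by
    rcases eq_or_lt_of_le hb0 with h0 | hbpos
    · calc b ^ 3 = 0 := by rw [← h0]; ring
        _ ≤ a * c ^ 2 := mul_nonneg ha0 (sq_nonneg c)
    · have h4 : b ^ 4 ≤ a * b * c ^ 2 := by nlinarith [sq_nonneg c, mul_nonneg hg0 hc0]
      refine le_of_mul_le_mul_left ?_ hbpos
      calc b * b ^ 3 = b ^ 4 := by ring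
        _ ≤ a * b * c ^ 2 := h4
        _ = b * (a * c ^ 2) := by ring
  constructor
  · have e1 : b ^ ((3:ℝ)/2) = Real.sqrt (b ^ 3) := by
      rw [Real.sqrt_eq_rpow, ← Real.rpow_natCast b 3, ← Real.rpow_mul hb0]
      norm_num
    rw [e1]
    calc Real.sqrt (b ^ 3) ≤ Real.sqrt (a * c ^ 2) := Real.sqrt_le_sqrt key
      _ = Real.sqrt a * c := by rw [Real.sqrt_mul ha0, Real.sqrt_sq hc0]
  · intro ha1
    have key' : b ^ 3 ≤ c ^ 2 := by
      have haa : a = 1 := ha1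
      rw [haa, one_mul] at key; exact key
    have e2 : b ^ ((3:ℝ)/4) = (b ^ 3) ^ ((1:ℝ)/4) := by
      rw [← Real.rpow_natCast b 3, ← Real.rpow_mul hb0]; norm_num
    have e3 : Real.sqrt c = (c ^ 2) ^ ((1:ℝ)/4) := by
      rw [Real.sqrt_eq_rpow, ← Real.rpow_natCast c 2, ← Real.rpow_mul hc0]
      norm_num
    rw [ge_iff_le, e2, e3]
    exact Real.rpow_le_rpow (by positivity) key' (by norm_num)
end
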